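/- Let α ∈ (0, π] and let G, Γ₁, Γ₂ be as in the context. Let u, v : ℝ² → ℝ be continuously differentiable on an open set containing cl(G) \ {0}, harmonic on G, and satisfy the Neumann condition −sin α · ∂u/∂x₁ + cos α · ∂u/∂x₂ = 0 and −sin α · ∂v/∂x₁ + cos α · ∂v/∂x₂ = 0 at every point of Γ₂. Assume there exist constants C > 0 and δ > 0 such that for all x ∈ cl(G) \ {0}: |u(x)|·|∇v(x)| + |v(x)|·|∇u(x)| ≤ C|x|^{δ−1} whenever 0 < |x| ≤ 1, and ≤ C|x|^{−δ−1} whenever |x| ≥ 1. Assume moreover that x ↦ ∇u(x)·∇v(x) is integrable on G and that x₁ ↦ v(x₁, 0)·∂u/∂x₂(x₁, 0) and x₁ ↦ u(x₁, 0)·∂v/∂x₂(x₁, 0) are integrable on (0, ∞). Then ∫_G ∇u(x)·∇v(x) dx = −∫_0^∞ v(x₁, 0)·∂u/∂x₂(x₁, 0) dx₁ = −∫_0^∞ u(x₁, 0)·∂v/∂x₂(x₁, 0) dx₁. -/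

import Mathlib

/-!
In polar coordinates `x = (r cos θ, r sin θ)` put `A = r v ∂ᵣu` and `B = v ∂_θu / r`. Since `u` is
harmonic, `∂ᵣA + ∂_θB = r ∇u·∇v`, so by the divergence theorem on the rectangle `[ε, R] × [0, α]`
the integral of `∇u·∇v` over the truncated sector is a boundary flux: `B` vanishes on `θ = α` by the
Neumann condition and equals `v ∂₂u` on `θ = 0`, while the decay bound makes the arcs `r = ε` and
`r = R` contribute at most `α C ε^δ` and `α C R^(-δ)`. Letting `ε → 0` and `R → ∞` gives the first
identity; the second is the first one with `u` and `v` exchanged.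
-/

open MeasureTheory

/-- The open plane sector `G = {(r cos θ, r sin θ) : r > 0, 0 < θ < α}` of opening
angle `α`. -/
def sector (α : ℝ) : Set (ℝ × ℝ) :=
  {p | ∃ r θ : ℝ, 0 < r ∧ 0 < θ ∧ θ < α ∧ p = (r * Real.cos θ, r * Real.sin θ)}

/-- First partial derivative `∂u/∂x₁`. -/
noncomputable def pd1 (u : ℝ × ℝ → ℝ) (x : ℝ × ℝ) : ℝ := fderiv ℝ u x (1, 0)

/-- Second partial derivative `∂u/∂x₂`. -/
noncomputable def pd2 (u : ℝ × ℝ → ℝ) (x : ℝ × ℝ) : ℝ := fderiv ℝ u x (0, 1)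

/-- Euclidean norm `|∇u(x)|` of the gradient. -/
noncomputable def gradNorm (u : ℝ × ℝ → ℝ) (x : ℝ × ℝ) : ℝ :=
  Real.sqrt (pd1 u x ^ 2 + pd2 u x ^ 2)

/-- The scalar product `∇u(x)·∇v(x)` of the gradients. -/
noncomputable def gradDot (u v : ℝ × ℝ → ℝ) (x : ℝ × ℝ) : ℝ :=
  pd1 u x * pd1 v x + pd2 u x * pd2 v x

/-- `u` is harmonic on `G`: at every point of `G` it is twice differentiable and
`∂²u/∂x₁² + ∂²u/∂x₂² = 0`. -/
def HarmonicOnSector (α : ℝ) (u : ℝ × ℝ → ℝ) : Prop :=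
  ∀ x ∈ sector α, DifferentiableAt ℝ u x ∧ DifferentiableAt ℝ (fderiv ℝ u) x ∧
    fderiv ℝ (fderiv ℝ u) x (1, 0) (1, 0) + fderiv ℝ (fderiv ℝ u) x (0, 1) (0, 1) = 0

/-- Zero Neumann data on `Γ₂ = {(r cos α, r sin α) : r > 0}`:
`−sin α · ∂u/∂x₁ + cos α · ∂u/∂x₂ = 0` there. -/
def NeumannOnGamma2 (α : ℝ) (u : ℝ × ℝ → ℝ) : Prop :=
  ∀ r : ℝ, 0 < r →
    -Real.sin α * pd1 u (r * Real.cos α, r * Real.sin α)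
      + Real.cos α * pd2 u (r * Real.cos α, r * Real.sin α) = 0

open Set Real Filter Topology

theorem abs_mul_add_mul_le (a b c d : ℝ) :
    |a * c + b * d| ≤ √(a ^ 2 + b ^ 2) * √(c ^ 2 + d ^ 2) := by
  rw [← sqrt_sq_eq_abs, ← sqrt_mul (by positivity)]
  exact sqrt_le_sqrt (by nlinarith [sq_nonneg (a * d - b * c)])

theorem fderiv_apply_eq_pd (u : ℝ × ℝ → ℝ) (x : ℝ × ℝ) (a b : ℝ) :
    fderiv ℝ u x (a, b) = a * pd1 u x + b * pd2 u x := by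
  rw [pd1, pd2, ← smul_eq_mul, ← smul_eq_mul, ← map_smul, ← map_smul, ← map_add]
  simp

theorem sqrt_polarCoord_symm {p : ℝ × ℝ} (hp : 0 ≤ p.1) :
    √((polarCoord.symm p).1 ^ 2 + (polarCoord.symm p).2 ^ 2) = p.1 := by
  have h : (polarCoord.symm p).1 ^ 2 + (polarCoord.symm p).2 ^ 2 = p.1 ^ 2 := by
    simp only [polarCoord_symm_apply]
    linear_combination p.1 ^ 2 * cos_sq_add_sin_sq p.2
  rw [h, sqrt_sq hp]

theorem polarCoord_symm_ne_zero {p : ℝ × ℝ} (hp : 0 < p.1) : polarCoord.symm p ≠ 0 := by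
  intro h0
  have := sqrt_polarCoord_symm hp.le
  simp only [h0, Prod.fst_zero, Prod.snd_zero] at this
  norm_num at this
  exact hp.ne this

theorem sector_eq_image (α : ℝ) : sector α = polarCoord.symm '' (Ioi 0 ×ˢ Ioo 0 α) := by
  ext x
  constructor
  · rintro ⟨r, θ, hr, h0, hα, rfl⟩
    exact ⟨(r, θ), ⟨hr, h0, hα⟩, rfl⟩
  · rintro ⟨⟨r, θ⟩, ⟨hr, h0, hα⟩, rfl⟩
    exact ⟨r, θ, hr, h0, hα, rfl⟩

theorem mapsTo_polarCoord_symm_closure_sector {α ε R : ℝ} (hα : 0 < α) (hε : 0 < ε) :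
    MapsTo polarCoord.symm (Icc ε R ×ˢ Icc 0 α) (closure (sector α) \ {0}) := by
  intro p hp
  have hcl : p ∈ closure (Ioi 0 ×ˢ Ioo 0 α) := by
    rw [closure_prod_eq, closure_Ioi, closure_Ioo hα.ne]
    exact ⟨hε.le.trans hp.1.1, hp.2⟩
  refine ⟨map_mem_closure continuous_polarCoord_symm hcl ?_,
    polarCoord_symm_ne_zero (hε.trans_le hp.1.1)⟩
  rw [sector_eq_image]
  exact mapsTo_image _ _

theorem sector_subset_closure_diff_zero (α : ℝ) : sector α ⊆ closure (sector α) \ {0} := by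
  rintro _ hx
  obtain ⟨r, θ, hr, -, -, rfl⟩ := id hx
  exact ⟨subset_closure hx, polarCoord_symm_ne_zero (p := (r, θ)) hr⟩

theorem setIntegral_image_polarCoord_symm {E : Type*} [NormedAddCommGroup E] [NormedSpace ℝ E]
    {S : Set (ℝ × ℝ)} (hS : MeasurableSet S) (hST : S ⊆ polarCoord.target) (g : ℝ × ℝ → E) :
    ∫ x in polarCoord.symm '' S, g x = ∫ p in S, p.1 • g (polarCoord.symm p) := by
  rw [integral_image_eq_integral_abs_det_fderiv_smul volume hS
    (fun p _ => (hasFDerivAt_polarCoord_symm p).hasFDerivWithinAt)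
    (polarCoord.symm.injOn.mono hST)]
  refine setIntegral_congr_fun hS fun p hp => ?_
  rw [det_fderivPolarCoordSymm, abs_of_pos (hST hp).1]

theorem integrableOn_image_polarCoord_symm_iff {E : Type*} [NormedAddCommGroup E]
    [NormedSpace ℝ E] {S : Set (ℝ × ℝ)} (hS : MeasurableSet S) (hST : S ⊆ polarCoord.target)
    (g : ℝ × ℝ → E) :
    IntegrableOn g (polarCoord.symm '' S) ↔
      IntegrableOn (fun p => p.1 • g (polarCoord.symm p)) S := by
  rw [integrableOn_image_iff_integrableOn_abs_det_fderiv_smul volume hS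
    (fun p _ => (hasFDerivAt_polarCoord_symm p).hasFDerivWithinAt)
    (polarCoord.symm.injOn.mono hST)]
  refine integrableOn_congr_fun (fun p hp => ?_) hS
  rw [det_fderivPolarCoordSymm, abs_of_pos (hST hp).1]

theorem polarRect_subset_target {α : ℝ} (hα : α ≤ π) : Ioi 0 ×ˢ Ioo 0 α ⊆ polarCoord.target :=
  prod_mono subset_rfl (Ioo_subset_Ioo (by linarith [pi_pos]) hα)

theorem polarRect_ae_eq (α : ℝ) :
    (Ioi 0 ×ˢ Ioo 0 α : Set (ℝ × ℝ)) =ᵐ[volume] Ioi 0 ×ˢ Icc 0 α := by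
  rw [Measure.volume_eq_prod]
  exact Measure.set_prod_ae_eq (ae_eq_refl _) Ioo_ae_eq_Icc

theorem setIntegral_sector_eq_polar {α : ℝ} (hα : α ≤ π) (g : ℝ × ℝ → ℝ) :
    ∫ x in sector α, g x = ∫ p in Ioi 0 ×ˢ Icc 0 α, p.1 * g (polarCoord.symm p) := by
  rw [sector_eq_image, setIntegral_image_polarCoord_symm (measurableSet_Ioi.prod measurableSet_Ioo)
    (polarRect_subset_target hα), setIntegral_congr_set (polarRect_ae_eq α)]
  rfl

theorem integrableOn_polar_of_integrableOn_sector {α : ℝ} (hα : α ≤ π) {g : ℝ × ℝ → ℝ}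
    (hg : IntegrableOn g (sector α)) :
    IntegrableOn (fun p => p.1 * g (polarCoord.symm p)) (Ioi 0 ×ˢ Icc 0 α) := by
  rw [sector_eq_image, integrableOn_image_polarCoord_symm_iff
    (measurableSet_Ioi.prod measurableSet_Ioo) (polarRect_subset_target hα)] at hg
  exact (integrableOn_congr_set_ae (polarRect_ae_eq α)).1 hg

theorem inv_succ_le_succ (n : ℕ) : (n + 1 : ℝ)⁻¹ ≤ n + 1 :=
  (inv_le_one_of_one_le₀ (by simp)).trans (by simp)

theorem monotone_Icc_inv_succ : Monotone fun n : ℕ => Icc ((n + 1 : ℝ)⁻¹) (n + 1) := by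
  intro m n hmn
  have h : (m + 1 : ℝ) ≤ n + 1 := by gcongr
  exact Icc_subset_Icc (inv_anti₀ (by positivity) h) h

theorem iUnion_Icc_inv_succ : ⋃ n : ℕ, Icc ((n + 1 : ℝ)⁻¹) (n + 1) = Ioi 0 := by
  ext x
  simp only [mem_iUnion, mem_Icc, mem_Ioi]
  constructor
  · rintro ⟨n, hn, -⟩
    exact lt_of_lt_of_le (by positivity) hn
  · intro hx
    obtain ⟨n, hn⟩ := exists_nat_gt (max x x⁻¹)
    rw [max_lt_iff] at hn
    refine ⟨n, ?_, by linarith⟩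
    rw [inv_le_comm₀ (by positivity) hx]
    linarith

theorem tendsto_setIntegral_Icc_inv_succ_prod {E : Type*} [NormedAddCommGroup E]
    [NormedSpace ℝ E] {t : Set ℝ} (ht : MeasurableSet t) {f : ℝ × ℝ → E}
    (hf : IntegrableOn f (Ioi 0 ×ˢ t)) :
    Tendsto (fun n : ℕ => ∫ p in Icc ((n + 1 : ℝ)⁻¹) (n + 1) ×ˢ t, f p) atTop
      (𝓝 (∫ p in Ioi 0 ×ˢ t, f p)) := by
  rw [← iUnion_Icc_inv_succ, iUnion_prod_const] at hf ⊢
  exact tendsto_setIntegral_of_monotone (fun n => measurableSet_Icc.prod ht)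
    (fun m n hmn => prod_mono (monotone_Icc_inv_succ hmn) subset_rfl) hf

theorem tendsto_intervalIntegral_inv_succ {E : Type*} [NormedAddCommGroup E]
    [NormedSpace ℝ E] {f : ℝ → E} (hf : IntegrableOn f (Ioi 0)) :
    Tendsto (fun n : ℕ => ∫ x in (n + 1 : ℝ)⁻¹..(n + 1), f x) atTop (𝓝 (∫ x in Ioi 0, f x)) := by
  rw [← iUnion_Icc_inv_succ] at hf ⊢
  refine (tendsto_setIntegral_of_monotone (fun n => measurableSet_Icc) monotone_Icc_inv_succ
    hf).congr fun n => ?_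
  rw [intervalIntegral.integral_of_le (inv_succ_le_succ n), integral_Icc_eq_integral_Ioc]

theorem exists_hasFDerivAt_mul_fderiv_apply {Φ w : ℝ × ℝ → ℝ × ℝ} {Φ' w' : ℝ × ℝ →L[ℝ] ℝ × ℝ}
    {p : ℝ × ℝ} {u v : ℝ × ℝ → ℝ}
    (hΦ : HasFDerivAt Φ Φ' p) (hw : HasFDerivAt w w' p) (hv : DifferentiableAt ℝ v (Φ p))
    (hu : DifferentiableAt ℝ (fderiv ℝ u) (Φ p)) :
    ∃ L : ℝ × ℝ →L[ℝ] ℝ, HasFDerivAt (fun q => v (Φ q) * fderiv ℝ u (Φ q) (w q)) L p ∧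
      ∀ h, L h = fderiv ℝ v (Φ p) (Φ' h) * fderiv ℝ u (Φ p) (w p)
        + v (Φ p) * (fderiv ℝ (fderiv ℝ u) (Φ p) (Φ' h) (w p) + fderiv ℝ u (Φ p) (w' h)) := by
  have hD : HasFDerivAt (fun q => fderiv ℝ u (Φ q) (w q)) _ p :=
    (hu.hasFDerivAt.comp p hΦ).clm_apply hw
  refine ⟨_, (hv.hasFDerivAt.comp p hΦ).mul hD, fun h => ?_⟩
  simp only [Function.comp_apply, smul_add, add_apply, smul_apply,
    ContinuousLinearMap.comp_apply, smul_eq_mul, ContinuousLinearMap.flip_apply]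
  ring

/-- With `x = (r cos θ, r sin θ)`, `radialFlux u v (r, θ) = r v ∂ᵣu` and
`angularFlux u v (r, θ) = v ∂_θu / r`. -/
noncomputable def radialFlux (u v : ℝ × ℝ → ℝ) (p : ℝ × ℝ) : ℝ :=
  v (polarCoord.symm p) * fderiv ℝ u (polarCoord.symm p) (polarCoord.symm p)

noncomputable def angularFlux (u v : ℝ × ℝ → ℝ) (p : ℝ × ℝ) : ℝ :=
  v (polarCoord.symm p) * fderiv ℝ u (polarCoord.symm p) (-sin p.2, cos p.2)

theorem exists_hasFDerivAt_neg_sin_cos (p : ℝ × ℝ) :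
    ∃ L : ℝ × ℝ →L[ℝ] ℝ × ℝ, HasFDerivAt (fun q : ℝ × ℝ => (-sin q.2, cos q.2)) L p ∧
      L (0, 1) = (-cos p.2, -sin p.2) := by
  refine ⟨_, ((hasDerivAt_sin p.2).comp_hasFDerivAt p hasFDerivAt_snd).neg.prodMk
    ((hasDerivAt_cos p.2).comp_hasFDerivAt p hasFDerivAt_snd), ?_⟩
  simp

/-- The chain-rule expansion of `∂ᵣA + ∂_θB` at `x = r (c, s)`, where `Du`, `Dv` are the first
derivatives of `u`, `v` and `H` is the second derivative of `u`. -/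
theorem polar_divergence_identity (Du Dv : ℝ × ℝ →L[ℝ] ℝ) (H : ℝ × ℝ →L[ℝ] ℝ × ℝ →L[ℝ] ℝ)
    (w r c s : ℝ) {x : ℝ × ℝ} (hx : x = (r * c, r * s)) (hcs : c ^ 2 + s ^ 2 = 1) :
    Dv (c, s) * Du x + w * (H (c, s) x + Du (c, s))
        + (Dv (-(r * s), r * c) * Du (-s, c) + w * (H (-(r * s), r * c) (-s, c) + Du (-c, -s)))
      = r * (Du (1, 0) * Dv (1, 0) + Du (0, 1) * Dv (0, 1)
        + w * (H (1, 0) (1, 0) + H (0, 1) (0, 1))) := by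
  have e (a b : ℝ) : ((a, b) : ℝ × ℝ) = a • (1, 0) + b • (0, 1) := by simp
  subst hx
  rw [e c s, e (r * c) (r * s), e (-(r * s)) (r * c), e (-s) c, e (-c) (-s)]
  simp only [map_add, map_smul, add_apply, smul_apply, smul_eq_mul]
  linear_combination r * (Du (1, 0) * Dv (1, 0) + Du (0, 1) * Dv (0, 1)
    + w * (H (1, 0) (1, 0) + H (0, 1) (0, 1))) * hcs

theorem fderiv_radialFlux_add_fderiv_angularFlux {u v : ℝ × ℝ → ℝ} {p : ℝ × ℝ}
    (hv : DifferentiableAt ℝ v (polarCoord.symm p))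
    (hu : DifferentiableAt ℝ (fderiv ℝ u) (polarCoord.symm p)) :
    DifferentiableAt ℝ (radialFlux u v) p ∧ DifferentiableAt ℝ (angularFlux u v) p ∧
    fderiv ℝ (radialFlux u v) p (1, 0) + fderiv ℝ (angularFlux u v) p (0, 1) =
      p.1 * (gradDot u v (polarCoord.symm p) + v (polarCoord.symm p) *
        (fderiv ℝ (fderiv ℝ u) (polarCoord.symm p) (1, 0) (1, 0)
          + fderiv ℝ (fderiv ℝ u) (polarCoord.symm p) (0, 1) (0, 1))) := by
  have hΦ := hasFDerivAt_polarCoord_symm p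
  have h10 : fderivPolarCoordSymm p (1, 0) = (cos p.2, sin p.2) := by
    simp [fderivPolarCoordSymm, Matrix.toLin_finTwoProd_apply]
  have h01 : fderivPolarCoordSymm p (0, 1) = (-(p.1 * sin p.2), p.1 * cos p.2) := by
    simp [fderivPolarCoordSymm, Matrix.toLin_finTwoProd_apply]
  obtain ⟨LA, hA : HasFDerivAt (radialFlux u v) LA p, hLA⟩ :=
    exists_hasFDerivAt_mul_fderiv_apply hΦ hΦ hv hu
  obtain ⟨W, hW, hW01⟩ := exists_hasFDerivAt_neg_sin_cos p
  obtain ⟨LB, hB : HasFDerivAt (angularFlux u v) LB p, hLB⟩ :=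
    exists_hasFDerivAt_mul_fderiv_apply hΦ hW hv hu
  refine ⟨hA.differentiableAt, hB.differentiableAt, ?_⟩
  rw [hA.fderiv, hB.fderiv, hLA, hLB, hW01, h10, h01, gradDot, pd1, pd2, pd1, pd2]
  exact polar_divergence_identity _ _ _ _ _ _ _ (polarCoord_symm_apply p)
    (cos_sq_add_sin_sq p.2)

section Continuity

variable {u v : ℝ × ℝ → ℝ} {W K : Set (ℝ × ℝ)}

theorem continuousOn_fderiv_polarCoord_symm_apply (hW : IsOpen W) (hu : ContDiffOn ℝ 1 u W)
    (hK : MapsTo polarCoord.symm K W) {w : ℝ × ℝ → ℝ × ℝ} (hw : ContinuousOn w K) :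
    ContinuousOn (fun p => fderiv ℝ u (polarCoord.symm p) (w p)) K :=
  ((hu.continuousOn_fderiv_of_isOpen hW le_rfl).comp continuous_polarCoord_symm.continuousOn
    hK).clm_apply hw

theorem continuousOn_radialFlux (hW : IsOpen W) (hu : ContDiffOn ℝ 1 u W)
    (hv : ContDiffOn ℝ 1 v W) (hK : MapsTo polarCoord.symm K W) :
    ContinuousOn (radialFlux u v) K :=
  (hv.continuousOn.comp continuous_polarCoord_symm.continuousOn hK).mul
    (continuousOn_fderiv_polarCoord_symm_apply hW hu hK continuous_polarCoord_symm.continuousOn)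

theorem continuousOn_angularFlux (hW : IsOpen W) (hu : ContDiffOn ℝ 1 u W)
    (hv : ContDiffOn ℝ 1 v W) (hK : MapsTo polarCoord.symm K W) :
    ContinuousOn (angularFlux u v) K :=
  (hv.continuousOn.comp continuous_polarCoord_symm.continuousOn hK).mul
    (continuousOn_fderiv_polarCoord_symm_apply hW hu hK (by fun_prop))

theorem continuousOn_mul_gradDot_polarCoord_symm (hW : IsOpen W) (hu : ContDiffOn ℝ 1 u W)
    (hv : ContDiffOn ℝ 1 v W) (hK : MapsTo polarCoord.symm K W) :
    ContinuousOn (fun p => p.1 * gradDot u v (polarCoord.symm p)) K := by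
  have hd {w : ℝ × ℝ → ℝ} (hw : ContDiffOn ℝ 1 w W) (h : ℝ × ℝ) :=
    continuousOn_fderiv_polarCoord_symm_apply hW hw hK (continuousOn_const (c := h))
  exact continuousOn_fst.mul (((hd hu _).mul (hd hv _)).add ((hd hu _).mul (hd hv _)))

end Continuity

theorem integral_polarRect_eq_boundary {α ε R : ℝ} (hα : 0 < α) (hε : 0 < ε) (hεR : ε ≤ R)
    {u v : ℝ × ℝ → ℝ} {W : Set (ℝ × ℝ)} (hW : IsOpen W)
    (hWsub : closure (sector α) \ {0} ⊆ W) (hu : ContDiffOn ℝ 1 u W) (hv : ContDiffOn ℝ 1 v W)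
    (hu_harm : HarmonicOnSector α u) :
    ∫ p in Icc ε R ×ˢ Icc 0 α, p.1 * gradDot u v (polarCoord.symm p) =
      (((∫ r in ε..R, angularFlux u v (r, α)) - ∫ r in ε..R, angularFlux u v (r, 0))
        + ∫ θ in 0..α, radialFlux u v (R, θ)) - ∫ θ in 0..α, radialFlux u v (ε, θ) := by
  have hK := (mapsTo_polarCoord_symm_closure_sector (R := R) hα hε).mono_right hWsub
  have hdiv : ∀ p ∈ Ioo ε R ×ˢ Ioo 0 α,
      DifferentiableAt ℝ (radialFlux u v) p ∧ DifferentiableAt ℝ (angularFlux u v) p ∧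
      fderiv ℝ (radialFlux u v) p (1, 0) + fderiv ℝ (angularFlux u v) p (0, 1) =
        p.1 * gradDot u v (polarCoord.symm p) := by
    rintro ⟨r, θ⟩ ⟨hr, hθ⟩
    have hx : polarCoord.symm (r, θ) ∈ sector α := ⟨r, θ, hε.trans hr.1, hθ.1, hθ.2, rfl⟩
    obtain ⟨-, hu₂, hΔu⟩ := hu_harm _ hx
    have hv₁ : DifferentiableAt ℝ v (polarCoord.symm (r, θ)) :=
      (hv.differentiableOn one_ne_zero).differentiableAt <| hW.mem_nhds <|
        hWsub (sector_subset_closure_diff_zero α hx)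
    obtain ⟨hA, hB, hAB⟩ := fderiv_radialFlux_add_fderiv_angularFlux hv₁ hu₂
    exact ⟨hA, hB, by rw [hAB, hΔu, mul_zero, add_zero]⟩
  have hae : (fun p => fderiv ℝ (radialFlux u v) p (1, 0) + fderiv ℝ (angularFlux u v) p (0, 1))
      =ᵐ[volume.restrict (Icc ε R ×ˢ Icc 0 α)]
        fun p => p.1 * gradDot u v (polarCoord.symm p) := by
    rw [Measure.volume_eq_prod,
      Measure.restrict_congr_set (Measure.set_prod_ae_eq Ioo_ae_eq_Icc Ioo_ae_eq_Icc).symm]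
    filter_upwards [ae_restrict_mem (measurableSet_Ioo.prod measurableSet_Ioo)] with p hp
    exact (hdiv p hp).2.2
  have hF : IntegrableOn (fun p => p.1 * gradDot u v (polarCoord.symm p))
      (Icc ε R ×ˢ Icc 0 α) :=
    (continuousOn_mul_gradDot_polarCoord_symm hW hu hv hK).integrableOn_compact
      (isCompact_Icc.prod isCompact_Icc)
  rw [← integral_congr_ae hae, Icc_prod_Icc]
  refine integral_divergence_prod_Icc_of_hasFDerivAt_off_countable_of_le _ _ _ _ (ε, 0) (R, α)
    ⟨hεR, hα.le⟩ ∅ countable_empty ?_ ?_ (fun p hp => (hdiv p hp.1).1.hasFDerivAt)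
    (fun p hp => (hdiv p hp.1).2.1.hasFDerivAt) ?_
  · exact continuousOn_radialFlux hW hu hv (by rwa [← Icc_prod_Icc])
  · exact continuousOn_angularFlux hW hu hv (by rwa [← Icc_prod_Icc])
  · rw [← Icc_prod_Icc]
    exact hF.congr_fun_ae hae.symm

theorem angularFlux_zero (u v : ℝ × ℝ → ℝ) (r : ℝ) :
    angularFlux u v (r, 0) = v (r, 0) * pd2 u (r, 0) := by
  simp [angularFlux, pd2]

theorem angularFlux_eq_zero_of_neumann {α : ℝ} {u : ℝ × ℝ → ℝ} (hu : NeumannOnGamma2 α u)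
    (v : ℝ × ℝ → ℝ) {r : ℝ} (hr : 0 < r) : angularFlux u v (r, α) = 0 := by
  rw [angularFlux, fderiv_apply_eq_pd, polarCoord_symm_apply, hu r hr, mul_zero]

theorem abs_radialFlux_le (u v : ℝ × ℝ → ℝ) {p : ℝ × ℝ} (hp : 0 ≤ p.1) :
    |radialFlux u v p| ≤
      p.1 * (|v (polarCoord.symm p)| * gradNorm u (polarCoord.symm p)) := by
  set x := polarCoord.symm p
  calc |radialFlux u v p| = |v x| * |x.1 * pd1 u x + x.2 * pd2 u x| := by
        rw [radialFlux, fderiv_apply_eq_pd, abs_mul]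
    _ ≤ |v x| * (p.1 * gradNorm u x) := by
        gcongr
        rw [← sqrt_polarCoord_symm hp]
        exact abs_mul_add_mul_le _ _ _ _
    _ = p.1 * (|v x| * gradNorm u x) := by ring

def SectorDecay (α : ℝ) (f : ℝ × ℝ → ℝ) : Prop :=
  ∃ C δ : ℝ, 0 < δ ∧ ∀ x ∈ closure (sector α) \ {(0 : ℝ × ℝ)},
    (√(x.1 ^ 2 + x.2 ^ 2) ≤ 1 → f x ≤ C * √(x.1 ^ 2 + x.2 ^ 2) ^ (δ - 1)) ∧
    (1 ≤ √(x.1 ^ 2 + x.2 ^ 2) → f x ≤ C * √(x.1 ^ 2 + x.2 ^ 2) ^ (-δ - 1))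

theorem SectorDecay.mono {α : ℝ} {f g : ℝ × ℝ → ℝ} (hg : SectorDecay α g)
    (hfg : ∀ x, f x ≤ g x) : SectorDecay α f := by
  obtain ⟨C, δ, hδ, hC⟩ := hg
  exact ⟨C, δ, hδ, fun x hx =>
    ⟨fun h => (hfg x).trans ((hC x hx).1 h), fun h => (hfg x).trans ((hC x hx).2 h)⟩⟩

theorem SectorDecay.tendsto_integral_radialFlux {α : ℝ} (hα : 0 < α) {u v : ℝ × ℝ → ℝ}
    (h : SectorDecay α fun x => |v x| * gradNorm u x) :
    Tendsto (fun r => ∫ θ in 0..α, radialFlux u v (r, θ)) (𝓝[>] 0) (𝓝 0) ∧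
    Tendsto (fun r => ∫ θ in 0..α, radialFlux u v (r, θ)) atTop (𝓝 0) := by
  obtain ⟨C, δ, hδ, hC⟩ := h
  have hbound : ∀ r > 0, ∀ θ ∈ Icc 0 α,
      (r ≤ 1 → |radialFlux u v (r, θ)| ≤ C * r ^ δ) ∧
      (1 ≤ r → |radialFlux u v (r, θ)| ≤ C * r ^ (-δ)) := by
    intro r hr θ hθ
    have hx := mapsTo_polarCoord_symm_closure_sector (R := r) hα hr
      (show (r, θ) ∈ Icc r r ×ˢ Icc 0 α from ⟨⟨le_rfl, le_rfl⟩, hθ⟩)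
    have hA := abs_radialFlux_le u v (p := (r, θ)) hr.le
    have hCr := hC _ hx
    rw [sqrt_polarCoord_symm hr.le] at hCr
    refine ⟨fun h1 => hA.trans ?_, fun h1 => hA.trans ?_⟩
    · calc r * _ ≤ r * (C * r ^ (δ - 1)) := mul_le_mul_of_nonneg_left (hCr.1 h1) hr.le
        _ = C * r ^ δ := by rw [rpow_sub_one hr.ne']; field_simp
    · calc r * _ ≤ r * (C * r ^ (-δ - 1)) := mul_le_mul_of_nonneg_left (hCr.2 h1) hr.le
        _ = C * r ^ (-δ) := by rw [rpow_sub_one hr.ne']; field_simp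
  have harc : ∀ r b : ℝ, (∀ θ ∈ Icc 0 α, |radialFlux u v (r, θ)| ≤ b) →
      ‖∫ θ in 0..α, radialFlux u v (r, θ)‖ ≤ b * α := fun r b hb => by
    have := intervalIntegral.norm_integral_le_of_norm_le_const
      (f := fun θ => radialFlux u v (r, θ))
      fun θ hθ => hb θ (Ioc_subset_Icc_self (by rwa [uIoc_of_le hα.le] at hθ))
    rwa [sub_zero, abs_of_pos hα] at this
  constructor
  · refine squeeze_zero_norm' ?_ (?_ : Tendsto (fun r => C * r ^ δ * α) _ _)
    · filter_upwards [Ioc_mem_nhdsGT one_pos] with r hr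
      exact harc r _ fun θ hθ => (hbound r hr.1 θ hθ).1 hr.2
    · simpa [zero_rpow hδ.ne'] using
        (((continuous_rpow_const hδ.le).tendsto 0).const_mul C |>.mul_const α).mono_left
          nhdsWithin_le_nhds
  · refine squeeze_zero_norm' ?_ (?_ : Tendsto (fun r => C * r ^ (-δ) * α) _ _)
    · filter_upwards [eventually_ge_atTop 1] with r hr
      exact harc r _ fun θ hθ => (hbound r (one_pos.trans_le hr) θ hθ).2 hr
    · simpa using ((tendsto_rpow_neg_atTop hδ).const_mul C).mul_const α

theorem integral_sector_gradDot_eq_neg_integral {α : ℝ} (hα₀ : 0 < α) (hα₁ : α ≤ π)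
    {u v : ℝ × ℝ → ℝ} {W : Set (ℝ × ℝ)} (hW : IsOpen W)
    (hWsub : closure (sector α) \ {0} ⊆ W) (hu : ContDiffOn ℝ 1 u W) (hv : ContDiffOn ℝ 1 v W)
    (hu_harm : HarmonicOnSector α u) (hu_neu : NeumannOnGamma2 α u)
    (hdecay : SectorDecay α fun x => |v x| * gradNorm u x)
    (hint : IntegrableOn (gradDot u v) (sector α))
    (hint₁ : IntegrableOn (fun x₁ : ℝ => v (x₁, 0) * pd2 u (x₁, 0)) (Ioi 0)) :
    ∫ x in sector α, gradDot u v x = -∫ x₁ in Ioi 0, v (x₁, 0) * pd2 u (x₁, 0) := by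
  set ε : ℕ → ℝ := fun n => (n + 1 : ℝ)⁻¹
  set R : ℕ → ℝ := fun n => n + 1
  set arc : ℝ → ℝ := fun r => ∫ θ in 0..α, radialFlux u v (r, θ)
  have hε : Tendsto ε atTop (𝓝[>] 0) :=
    tendsto_inv_atTop_nhdsGT_zero.comp (tendsto_natCast_atTop_atTop.atTop_add tendsto_const_nhds)
  have hR : Tendsto R atTop atTop :=
    tendsto_natCast_atTop_atTop.atTop_add tendsto_const_nhds
  have hgreen : ∀ n, ∫ p in Icc (ε n) (R n) ×ˢ Icc 0 α, p.1 * gradDot u v (polarCoord.symm p) =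
      -(∫ r in ε n..R n, v (r, 0) * pd2 u (r, 0)) + arc (R n) - arc (ε n) := by
    intro n
    have hεn : 0 < ε n := by positivity
    have hΓ₂ : ∫ r in ε n..R n, angularFlux u v (r, α) = 0 := by
      refine intervalIntegral.integral_zero_ae (.of_forall fun r hr => ?_)
      rw [uIoc_of_le (inv_succ_le_succ n)] at hr
      exact angularFlux_eq_zero_of_neumann hu_neu v (hεn.trans hr.1)
    rw [integral_polarRect_eq_boundary hα₀ hεn (inv_succ_le_succ n) hW hWsub hu hv hu_harm, hΓ₂]
    simp only [angularFlux_zero]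
    ring
  have hlim := (tendsto_setIntegral_Icc_inv_succ_prod measurableSet_Icc
    (integrableOn_polar_of_integrableOn_sector hα₁ hint))
  rw [← setIntegral_sector_eq_polar hα₁, funext hgreen] at hlim
  have hlim' := ((tendsto_intervalIntegral_inv_succ hint₁).neg.add
    ((hdecay.tendsto_integral_radialFlux hα₀).2.comp hR)).sub
    ((hdecay.tendsto_integral_radialFlux hα₀).1.comp hε)
  rw [add_zero, sub_zero] at hlim'
  exact tendsto_nhds_unique hlim hlim'

/-- Green's identity in the sector, expressing the symmetry of the
Dirichlet-to-Neumann map: for harmonic `u, v` with zero Neumann data on `Γ₂`,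
suitable decay at the corner and at infinity, and the relevant integrabilities,
`∫_G ∇u·∇v = −∫₀^∞ v(x₁,0) ∂u/∂x₂(x₁,0) dx₁ = −∫₀^∞ u(x₁,0) ∂v/∂x₂(x₁,0) dx₁`. -/
theorem stmt_9 (α : ℝ) (hα₀ : 0 < α) (hα₁ : α ≤ Real.pi)
    (u v : ℝ × ℝ → ℝ)
    (hu_smooth : ∃ U : Set (ℝ × ℝ), IsOpen U ∧
      closure (sector α) \ {(0 : ℝ × ℝ)} ⊆ U ∧ ContDiffOn ℝ 1 u U)
    (hv_smooth : ∃ U : Set (ℝ × ℝ), IsOpen U ∧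
      closure (sector α) \ {(0 : ℝ × ℝ)} ⊆ U ∧ ContDiffOn ℝ 1 v U)
    (hu_harm : HarmonicOnSector α u) (hv_harm : HarmonicOnSector α v)
    (hu_neu : NeumannOnGamma2 α u) (hv_neu : NeumannOnGamma2 α v)
    (hdecay : ∃ C : ℝ, 0 < C ∧ ∃ δ : ℝ, 0 < δ ∧
      ∀ x ∈ closure (sector α) \ {(0 : ℝ × ℝ)},
        (Real.sqrt (x.1 ^ 2 + x.2 ^ 2) ≤ 1 →
          |u x| * gradNorm v x + |v x| * gradNorm u x
            ≤ C * Real.sqrt (x.1 ^ 2 + x.2 ^ 2) ^ (δ - 1)) ∧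
        (1 ≤ Real.sqrt (x.1 ^ 2 + x.2 ^ 2) →
          |u x| * gradNorm v x + |v x| * gradNorm u x
            ≤ C * Real.sqrt (x.1 ^ 2 + x.2 ^ 2) ^ (-δ - 1)))
    (hint : IntegrableOn (gradDot u v) (sector α) volume)
    (hint1 : IntegrableOn (fun x₁ : ℝ => v (x₁, 0) * pd2 u (x₁, 0)) (Set.Ioi 0) volume)
    (hint2 : IntegrableOn (fun x₁ : ℝ => u (x₁, 0) * pd2 v (x₁, 0)) (Set.Ioi 0) volume) :
    ∫ x in sector α, gradDot u v x
        = -∫ x₁ in Set.Ioi (0 : ℝ), v (x₁, 0) * pd2 u (x₁, 0) ∧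
    ∫ x in sector α, gradDot u v x
        = -∫ x₁ in Set.Ioi (0 : ℝ), u (x₁, 0) * pd2 v (x₁, 0) := by
  obtain ⟨U, hU, hUsub, hu⟩ := hu_smooth
  obtain ⟨V, hV, hVsub, hv⟩ := hv_smooth
  obtain ⟨C, -, δ, hδ, hC⟩ := hdecay
  have hdecay : SectorDecay α fun x => |u x| * gradNorm v x + |v x| * gradNorm u x :=
    ⟨C, δ, hδ, hC⟩
  have hnonneg (f g : ℝ × ℝ → ℝ) (x) : 0 ≤ |f x| * gradNorm g x :=
    mul_nonneg (abs_nonneg _) (sqrt_nonneg _)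
  have hW := hU.inter hV
  have hWsub := subset_inter hUsub hVsub
  have huW := hu.mono (inter_subset_left (t := V))
  have hvW := hv.mono (inter_subset_right (s := U))
  refine ⟨integral_sector_gradDot_eq_neg_integral hα₀ hα₁ hW hWsub huW hvW hu_harm hu_neu
    (hdecay.mono fun x => le_add_of_nonneg_left (hnonneg u v x)) hint hint1, ?_⟩
  have hsymm : gradDot u v = gradDot v u := funext fun x => by simp only [gradDot]; ring
  rw [hsymm] at hint ⊢
  exact integral_sector_gradDot_eq_neg_integral hα₀ hα₁ hW hWsub hvW huW hv_harm hv_neu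
    (hdecay.mono fun x => le_add_of_nonneg_right (hnonneg v u x)) hint hint2
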